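/- For every graphon W : [0,1]² → [0,1] and every integer K ≥ 2, there exists a partition P of [0,1] into K measurable sets and a symmetric matrix (w_{kk'}) ∈ [0,1]^{K×K} such that the step function W_P satisfies δ_□(W, W_P) ≤ (2/√(log K)) · ‖W‖_{L²}. -/

import Mathlib

open MeasureTheory unitInterval

noncomputable section

/-- The cut norm of a kernel `U : [0,1]² → ℝ`:
`sup` over measurable `S, T ⊆ [0,1]` of `|∫_{S×T} U|`. -/
def cutNorm (U : I → I → ℝ) : ℝ :=
  sSup { r : ℝ | ∃ S T : Set I, MeasurableSet S ∧ MeasurableSet T ∧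
    r = |∫ p in S ×ˢ T, U p.1 p.2| }

/-- The L¹ norm of a kernel on `[0,1]²`. -/
def l1Norm (U : I → I → ℝ) : ℝ := ∫ p : I × I, |U p.1 p.2|

/-- The L² norm of a kernel on `[0,1]²`. -/
def l2Norm (U : I → I → ℝ) : ℝ := Real.sqrt (∫ p : I × I, (U p.1 p.2) ^ 2)

/-- The cut distance: `inf` over Lebesgue-measure-preserving `φ : [0,1] → [0,1]`
of `‖W₁ - W₂^φ‖_□`. -/
def cutDist (W₁ W₂ : I → I → ℝ) : ℝ :=
  sInf { r : ℝ | ∃ φ : I → I, MeasurePreserving φ volume volume ∧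
    r = cutNorm (fun x y => W₁ x y - W₂ (φ x) (φ y)) }

/-- The δ₁ distance: `inf` over Lebesgue-measure-preserving `φ : [0,1] → [0,1]`
of `‖W₁ - W₂^φ‖_{L¹}`. -/
def delta1 (W₁ W₂ : I → I → ℝ) : ℝ :=
  sInf { r : ℝ | ∃ φ : I → I, MeasurePreserving φ volume volume ∧
    r = l1Norm (fun x y => W₁ x y - W₂ (φ x) (φ y)) }

/-- A graphon: a symmetric measurable function `[0,1]² → [0,1]`. -/
def IsGraphon (W : I → I → ℝ) : Prop :=
  Measurable (Function.uncurry W) ∧ (∀ x y, W x y = W y x) ∧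
    ∀ x y, W x y ∈ Set.Icc (0 : ℝ) 1

open Classical in
/-- The step function associated to a partition `P` of `[0,1]` into `K` measurable
sets and a value matrix `w`. -/
def stepFun {K : ℕ} (P : Fin K → Set I) (w : Fin K → Fin K → ℝ) : I → I → ℝ :=
  fun x y => ∑ k, ∑ k', if x ∈ P k ∧ y ∈ P k' then w k k' else 0

/-- The `n`-th cell of the equitable partition of `[0,1]` into `N` intervals:
`[n/N, (n+1)/N)`, with the last cell closed at `1`. -/
def eqCell (N : ℕ) (n : Fin N) : Set I :=
  {x : I | ((n : ℕ) : ℝ) / N ≤ (x : ℝ) ∧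
    ((x : ℝ) < (((n : ℕ) : ℝ) + 1) / N ∨ (n : ℕ) + 1 = N)}

/-- The step function of a graph with adjacency matrix `A ∈ {0,1}^{N×N}`,
built on the equitable partition of `[0,1]` into `N` intervals. -/
def graphStepFun (N : ℕ) (A : Fin N → Fin N → ℝ) : I → I → ℝ :=
  stepFun (eqCell N) A

/-!
The energy-increment argument of Frieze and Kannan. For a finite measurable partition `P` of
`[0,1]`, the step function `W_P` is the conditional expectation of `W` given `P × P`, so
`‖W‖₂² = ‖W_P‖₂² + ‖W - W_P‖₂²` and, by Cauchy–Schwarz, `‖W - W_P‖_□² ≤ ‖W‖₂² - ‖W_P‖₂²`.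
If a rectangle `S × T` witnesses `‖W - W_P‖_□ > ε`, then `S × T` is a union of cells of the
refinement `P'` of `P` by `S` and `T`, which has four times as many cells, and the same two
facts applied to `W_{P'} - W_P` give `‖W_{P'}‖₂² ≥ ‖W_P‖₂² + ε²`. Hence after
`j = ⌊log K / 4⌋` refinements of the trivial partition, either the cut norm is at most `ε` or
`‖W_P‖₂² ≥ j ε²`, and then `‖W - W_P‖_□² ≤ ‖W‖₂² - j ε² ≤ ε²` for `ε = 2 ‖W‖₂ / √(log K)`.
The partition has at most `4 ^ j ≤ K` cells, and the identity map bounds `δ_□` by `‖·‖_□`.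
-/

section FiberAverage

variable {α κ : Type*} [MeasurableSpace α] {μ : Measure α} {f : α → κ} {g : α → ℝ}

/-- The conditional expectation of `g` given the partition of `α` into the fibers of `f`
(zero on null fibers). -/
def fiberAverage (μ : Measure α) (f : α → κ) (g : α → ℝ) (a : α) : ℝ :=
  ⨍ b in f ⁻¹' {f a}, g b ∂μ

lemma fiberAverage_comp_of_injective {κ' : Type*} {e : κ → κ'} (he : e.Injective) :
    fiberAverage μ (e ∘ f) g = fiberAverage μ f g := by
  ext a
  simp only [fiberAverage, Function.comp_apply, Set.preimage_comp]
  congr 2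
  ext x
  simp [he.eq_iff]

lemma integral_sq_eq_add_integral_sq_sub {u v : α → ℝ} (hu : MemLp u 2 μ) (hv : MemLp v 2 μ)
    (h : ∫ a, u a * v a ∂μ = ∫ a, v a * v a ∂μ) :
    ∫ a, u a ^ 2 ∂μ = ∫ a, v a ^ 2 ∂μ + ∫ a, (u a - v a) ^ 2 ∂μ := by
  have huv : Integrable (fun a => u a * v a) μ := hu.integrable_mul hv
  have hexpand : ∫ a, (u a - v a) ^ 2 ∂μ
      = ∫ a, u a ^ 2 ∂μ - 2 * ∫ a, u a * v a ∂μ + ∫ a, v a ^ 2 ∂μ := by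
    have hpt : ∀ a, (u a - v a) ^ 2 = u a ^ 2 - 2 * (u a * v a) + v a ^ 2 := fun a => by ring
    simp only [hpt]
    have hdiff : Integrable (fun a => u a ^ 2 - 2 * (u a * v a)) μ :=
      hu.integrable_sq.sub (huv.const_mul 2)
    rw [integral_add hdiff hv.integrable_sq,
      integral_sub hu.integrable_sq (huv.const_mul 2), integral_const_mul]
  simp only [← sq] at h
  linarith

lemma sq_setIntegral_le_integral_sq [IsProbabilityMeasure μ] {v : α → ℝ} (hv : MemLp v 2 μ)
    {s : Set α} (hs : MeasurableSet s) : (∫ a in s, v a ∂μ) ^ 2 ≤ ∫ a, v a ^ 2 ∂μ := by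
  have hvs : MemLp (s.indicator v) 2 μ := hv.indicator hs
  have hvar := ProbabilityTheory.variance_nonneg (s.indicator v) μ
  rw [ProbabilityTheory.variance_eq_sub hvs, sub_nonneg] at hvar
  calc (∫ a in s, v a ∂μ) ^ 2 = (∫ a, s.indicator v a ∂μ) ^ 2 := by rw [integral_indicator hs]
    _ ≤ ∫ a, s.indicator v a ^ 2 ∂μ := hvar
    _ ≤ ∫ a, v a ^ 2 ∂μ := integral_mono hvs.integrable_sq hv.integrable_sq fun a => by
        by_cases ha : a ∈ s <;> simp [ha, sq_nonneg]

variable [Fintype κ] [MeasurableSpace κ] [MeasurableSingletonClass κ]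

lemma memLp_comp_of_fintype [IsFiniteMeasure μ] (hf : Measurable f) (h : κ → ℝ)
    (p : ENNReal) : MemLp (fun a => h (f a)) p μ :=
  MemLp.of_bound ((measurable_of_countable h).comp hf).aestronglyMeasurable (∑ k, ‖h k‖)
    (ae_of_all _ fun a => Finset.single_le_sum (fun k _ => norm_nonneg (h k))
      (Finset.mem_univ (f a)))

lemma memLp_fiberAverage [IsFiniteMeasure μ] (hf : Measurable f) (p : ENNReal) :
    MemLp (fiberAverage μ f g) p μ :=
  memLp_comp_of_fintype hf (fun k => ⨍ b in f ⁻¹' {k}, g b ∂μ) p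

lemma integral_eq_sum_setIntegral_fiber (hf : Measurable f) {F : α → ℝ} (hF : Integrable F μ) :
    ∫ a, F a ∂μ = ∑ k, ∫ a in f ⁻¹' {k}, F a ∂μ := by
  rw [← integral_iUnion_fintype (fun k => hf (measurableSet_singleton k))
    (pairwise_disjoint_fiber f) (fun k => hF.integrableOn), ← Set.preimage_iUnion,
    Set.iUnion_of_singleton, Set.preimage_univ, Measure.restrict_univ]

lemma integral_fiberAverage_mul [IsFiniteMeasure μ] (hf : Measurable f) (hg : Integrable g μ)
    (h : κ → ℝ) :
    ∫ a, fiberAverage μ f g a * h (f a) ∂μ = ∫ a, g a * h (f a) ∂μ := by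
  have hh := memLp_comp_of_fintype (μ := μ) hf h ⊤
  rw [integral_eq_sum_setIntegral_fiber (F := fun a => fiberAverage μ f g a * h (f a)) hf
      (((memLp_fiberAverage hf 1).integrable le_rfl).mul_of_top_left hh),
    integral_eq_sum_setIntegral_fiber (F := fun a => g a * h (f a)) hf (hg.mul_of_top_left hh)]
  refine Finset.sum_congr rfl fun k _ => ?_
  have hk : MeasurableSet (f ⁻¹' {k}) := hf (measurableSet_singleton k)
  calc ∫ a in f ⁻¹' {k}, fiberAverage μ f g a * h (f a) ∂μ
      = ∫ a in f ⁻¹' {k}, (⨍ b in f ⁻¹' {k}, g b ∂μ) * h k ∂μ :=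
        setIntegral_congr_fun hk fun a (ha : f a = k) => by simp only [fiberAverage, ha]
    _ = (∫ a in f ⁻¹' {k}, g a ∂μ) * h k := by
        rw [setIntegral_const, ← measure_smul_setAverage g (measure_ne_top μ _), smul_eq_mul,
          smul_eq_mul, mul_assoc]
    _ = ∫ a in f ⁻¹' {k}, g a * h (f a) ∂μ := by
        rw [← integral_mul_const]
        exact setIntegral_congr_fun hk fun a (ha : f a = k) => by simp only [ha]

lemma integral_sq_eq_integral_sq_fiberAverage_add [IsFiniteMeasure μ] (hf : Measurable f)
    (hg : MemLp g 2 μ) :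
    ∫ a, g a ^ 2 ∂μ
      = ∫ a, fiberAverage μ f g a ^ 2 ∂μ + ∫ a, (g a - fiberAverage μ f g a) ^ 2 ∂μ :=
  integral_sq_eq_add_integral_sq_sub hg (memLp_fiberAverage hf 2)
    (integral_fiberAverage_mul hf (hg.integrable one_le_two)
      (fun k => ⨍ b in f ⁻¹' {k}, g b ∂μ)).symm

lemma sq_setIntegral_sub_fiberAverage_le [IsProbabilityMeasure μ] (hf : Measurable f)
    (hg : MemLp g 2 μ) {s : Set α} (hs : MeasurableSet s) :
    (∫ a in s, (g a - fiberAverage μ f g a) ∂μ) ^ 2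
      ≤ ∫ a, g a ^ 2 ∂μ - ∫ a, fiberAverage μ f g a ^ 2 ∂μ := by
  rw [integral_sq_eq_integral_sq_fiberAverage_add hf hg, add_sub_cancel_left]
  exact sq_setIntegral_le_integral_sq (hg.sub (memLp_fiberAverage hf 2)) hs

lemma setIntegral_fiberAverage_preimage [IsFiniteMeasure μ] (hf : Measurable f)
    (hg : Integrable g μ) (t : Set κ) :
    ∫ a in f ⁻¹' t, fiberAverage μ f g a ∂μ = ∫ a in f ⁻¹' t, g a ∂μ := by
  have hs : MeasurableSet (f ⁻¹' t) := hf (Set.toFinite t).measurableSet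
  rw [← integral_indicator hs, ← integral_indicator hs]
  convert integral_fiberAverage_mul hf hg (t.indicator 1) using 2 <;> ext a <;>
    by_cases ha : f a ∈ t <;> simp [Set.indicator, ha]

section Refinement

variable {κ' : Type*} [Fintype κ'] [MeasurableSpace κ'] [MeasurableSingletonClass κ']
  {f' : α → κ'} {r : κ' → κ}

lemma integral_sq_fiberAverage_of_refines [IsFiniteMeasure μ] (hf : Measurable f)
    (hf' : Measurable f') (hr : ∀ a, f a = r (f' a)) (hg : MemLp g 2 μ) :
    ∫ a, fiberAverage μ f' g a ^ 2 ∂μ = ∫ a, fiberAverage μ f g a ^ 2 ∂μ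
      + ∫ a, (fiberAverage μ f' g a - fiberAverage μ f g a) ^ 2 ∂μ := by
  set A : κ → ℝ := fun k => ⨍ b in f ⁻¹' {k}, g b ∂μ
  have hA : ∀ a, fiberAverage μ f g a = A (r (f' a)) := fun a => by
    simp only [fiberAverage, A, hr a]
  refine integral_sq_eq_add_integral_sq_sub (memLp_fiberAverage hf' 2) (memLp_fiberAverage hf 2) ?_
  have hg1 := hg.integrable one_le_two
  calc ∫ a, fiberAverage μ f' g a * fiberAverage μ f g a ∂μ
      = ∫ a, g a * fiberAverage μ f g a ∂μ := by
        simp only [hA]; exact integral_fiberAverage_mul hf' hg1 (fun k' => A (r k'))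
    _ = ∫ a, fiberAverage μ f g a * fiberAverage μ f g a ∂μ :=
        (integral_fiberAverage_mul hf hg1 A).symm

lemma sq_setIntegral_sub_fiberAverage_le_of_refines [IsProbabilityMeasure μ] (hf : Measurable f)
    (hf' : Measurable f') (hr : ∀ a, f a = r (f' a)) (hg : MemLp g 2 μ) (t : Set κ') :
    (∫ a in f' ⁻¹' t, (g a - fiberAverage μ f g a) ∂μ) ^ 2
      ≤ ∫ a, fiberAverage μ f' g a ^ 2 ∂μ - ∫ a, fiberAverage μ f g a ^ 2 ∂μ := by
  have hs : MeasurableSet (f' ⁻¹' t) := hf' (Set.toFinite t).measurableSet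
  have hg1 := hg.integrable one_le_two
  have hB := (memLp_fiberAverage (g := g) (μ := μ) hf 1).integrable le_rfl
  have hB' := (memLp_fiberAverage (g := g) (μ := μ) hf' 1).integrable le_rfl
  have hcut : ∫ a in f' ⁻¹' t, (g a - fiberAverage μ f g a) ∂μ
      = ∫ a in f' ⁻¹' t, (fiberAverage μ f' g a - fiberAverage μ f g a) ∂μ := by
    rw [integral_sub hg1.integrableOn hB.integrableOn,
      integral_sub hB'.integrableOn hB.integrableOn, setIntegral_fiberAverage_preimage hf' hg1]
  rw [hcut, integral_sq_fiberAverage_of_refines hf hf' hr hg, add_sub_cancel_left]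
  exact sq_setIntegral_le_integral_sq
    ((memLp_fiberAverage hf' 2).sub (memLp_fiberAverage hf 2)) hs

end Refinement

end FiberAverage

section SetAverage

variable {α : Type*} [MeasurableSpace α] {μ : Measure α}

lemma setAverage_mem_Icc [IsFiniteMeasure μ] {g : α → ℝ} (hg : Integrable g μ)
    (hg01 : ∀ a, g a ∈ Set.Icc (0 : ℝ) 1) (s : Set α) :
    ⨍ a in s, g a ∂μ ∈ Set.Icc (0 : ℝ) 1 := by
  rw [setAverage_eq, smul_eq_mul]
  refine ⟨mul_nonneg (inv_nonneg.2 measureReal_nonneg) (integral_nonneg fun a => (hg01 a).1),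
    inv_mul_le_one_of_le₀ ?_ measureReal_nonneg⟩
  calc ∫ a in s, g a ∂μ ≤ ∫ _ in s, (1 : ℝ) ∂μ :=
        integral_mono hg.integrableOn (integrable_const 1) fun a => (hg01 a).2
    _ = μ.real s := by simp

lemma setAverage_prod_comm [SFinite μ] {W : α → α → ℝ} (hsym : ∀ x y, W x y = W y x)
    (A B : Set α) :
    ⨍ p in A ×ˢ B, W p.1 p.2 ∂μ.prod μ = ⨍ p in B ×ˢ A, W p.1 p.2 ∂μ.prod μ := by
  rw [setAverage_eq, setAverage_eq, measureReal_prod_prod, measureReal_prod_prod, mul_comm,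
    ← setIntegral_prod_swap]
  simp only [Prod.fst_swap, Prod.snd_swap, hsym]

end SetAverage

lemma cutNorm_le_of_forall {U : I → I → ℝ} {ε : ℝ} (hε : 0 ≤ ε)
    (h : ∀ S T : Set I, MeasurableSet S → MeasurableSet T → |∫ p in S ×ˢ T, U p.1 p.2| ≤ ε) :
    cutNorm U ≤ ε := by
  refine Real.sSup_le ?_ hε
  rintro _ ⟨S, T, hS, hT, rfl⟩
  exact h S T hS hT

lemma cutDist_le_cutNorm_sub (W₁ W₂ : I → I → ℝ) :
    cutDist W₁ W₂ ≤ cutNorm (fun x y => W₁ x y - W₂ x y) := by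
  refine csInf_le ⟨0, ?_⟩ ⟨id, MeasurePreserving.id volume, rfl⟩
  rintro _ ⟨φ, -, rfl⟩
  refine Real.sSup_nonneg ?_
  rintro _ ⟨S, T, -, -, rfl⟩
  exact abs_nonneg _

lemma stepFun_fiber {K : ℕ} (c : I → Fin K) (w : Fin K → Fin K → ℝ) (x y : I) :
    stepFun (fun k => c ⁻¹' {k}) w x y = w (c x) (c y) := by
  classical
  simp [stepFun, ite_and, Finset.sum_ite_eq]

lemma IsGraphon.memLp_two {W : I → I → ℝ} (hW : IsGraphon W) :
    MemLp (Function.uncurry W) 2 :=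
  MemLp.of_bound hW.1.aestronglyMeasurable 1 (ae_of_all _ fun p => by
    obtain ⟨h0, h1⟩ := hW.2.2 p.1 p.2
    rw [Real.norm_eq_abs, abs_le]
    exact ⟨(by linarith : (-1 : ℝ) ≤ W p.1 p.2), h1⟩)

section BlockAverage

variable {κ : Type*} {W : I → I → ℝ}

/-- The step function `W_P` of the partition of `[0,1]` into the fibers of `c`. -/
def blockAverage (W : I → I → ℝ) (c : I → κ) (x y : I) : ℝ :=
  fiberAverage volume (Prod.map c c) (Function.uncurry W) (x, y)

lemma blockAverage_apply (c : I → κ) (x y : I) :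
    blockAverage W c x y = ⨍ p in (c ⁻¹' {c x}) ×ˢ (c ⁻¹' {c y}), W p.1 p.2 := by
  rw [blockAverage, fiberAverage, Prod.map_apply, ← Set.singleton_prod_singleton,
    Set.preimage_prod_map_prod]
  rfl

lemma blockAverage_comp_of_injective {κ' : Type*} {c : I → κ} {e : κ → κ'}
    (he : e.Injective) : blockAverage W (e ∘ c) = blockAverage W c := by
  ext x y
  exact congrFun (fiberAverage_comp_of_injective (f := Prod.map c c) (he.prodMap he)) (x, y)

variable [Fintype κ] [MeasurableSpace κ] [MeasurableSingletonClass κ]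

lemma cutNorm_sub_blockAverage_le (hW : MemLp (Function.uncurry W) 2) {c : I → κ}
    (hc : Measurable c) :
    cutNorm (fun x y => W x y - blockAverage W c x y)
      ≤ √((∫ p : I × I, W p.1 p.2 ^ 2) - ∫ p : I × I, blockAverage W c p.1 p.2 ^ 2) := by
  refine cutNorm_le_of_forall (Real.sqrt_nonneg _) fun S T hS hT => ?_
  rw [← Real.sqrt_sq_eq_abs]
  exact Real.sqrt_le_sqrt (sq_setIntegral_sub_fiberAverage_le (hc.prodMap hc) hW (hS.prod hT))

lemma exists_refinement_energy_ge (hW : MemLp (Function.uncurry W) 2) {n : ℕ} {c : I → Fin n}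
    (hc : Measurable c) {S T : Set I} (hS : MeasurableSet S) (hT : MeasurableSet T) :
    ∃ c' : I → Fin (n * 4), Measurable c' ∧
      (∫ p : I × I, blockAverage W c p.1 p.2 ^ 2)
          + (∫ p in S ×ˢ T, (W p.1 p.2 - blockAverage W c p.1 p.2)) ^ 2
        ≤ ∫ p : I × I, blockAverage W c' p.1 p.2 ^ 2 := by
  classical
  let c₁ : I → Fin n × Bool × Bool := fun x => (c x, decide (x ∈ S), decide (x ∈ T))
  have hc₁ : Measurable c₁ :=
    hc.prodMk ((measurable_to_bool (by convert hS; ext; simp)).prodMk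
      (measurable_to_bool (by convert hT; ext; simp)))
  let e : Fin n × Bool × Bool ≃ Fin (n * 4) := Fintype.equivFinOfCardEq (by simp)
  refine ⟨e ∘ c₁, (measurable_of_countable e).comp hc₁, ?_⟩
  have hST : S ×ˢ T = Prod.map c₁ c₁ ⁻¹' {q | q.1.2.1 = true ∧ q.2.2.2 = true} := by
    ext p; simp [c₁]
  have h := sq_setIntegral_sub_fiberAverage_le_of_refines (hc.prodMap hc) (hc₁.prodMap hc₁)
    (r := Prod.map Prod.fst Prod.fst) (fun _ => rfl) hW {q | q.1.2.1 = true ∧ q.2.2.2 = true}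
  rw [← hST] at h
  rw [blockAverage_comp_of_injective e.injective]
  exact le_sub_iff_add_le'.1 h

lemma exists_partition_cutNorm_le_or_energy_ge (hW : MemLp (Function.uncurry W) 2) {ε : ℝ}
    (hε : 0 ≤ ε) (j : ℕ) :
    ∃ n ≤ 4 ^ j, ∃ c : I → Fin n, Measurable c ∧
      (cutNorm (fun x y => W x y - blockAverage W c x y) ≤ ε
        ∨ j * ε ^ 2 ≤ ∫ p : I × I, blockAverage W c p.1 p.2 ^ 2) := by
  induction j with
  | zero =>
    exact ⟨1, le_rfl, fun _ => 0, measurable_const,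
      Or.inr (by simpa using integral_nonneg fun p => sq_nonneg _)⟩
  | succ j ih =>
    obtain ⟨n, hn, c, hc, hcut | henergy⟩ := ih
    · exact ⟨n, hn.trans (Nat.pow_le_pow_right (by norm_num) j.le_succ), c, hc, Or.inl hcut⟩
    by_cases hsmall : ∀ S T : Set I, MeasurableSet S → MeasurableSet T →
        |∫ p in S ×ˢ T, (W p.1 p.2 - blockAverage W c p.1 p.2)| ≤ ε
    · exact ⟨n, hn.trans (Nat.pow_le_pow_right (by norm_num) j.le_succ), c, hc,
        Or.inl (cutNorm_le_of_forall hε hsmall)⟩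
    push Not at hsmall
    obtain ⟨S, T, hS, hT, hST⟩ := hsmall
    obtain ⟨c', hc', hinc⟩ := exists_refinement_energy_ge hW hc hS hT
    refine ⟨n * 4, by rw [pow_succ]; omega, c', hc', Or.inr ?_⟩
    have hε2 : ε ^ 2 ≤ (∫ p in S ×ˢ T, (W p.1 p.2 - blockAverage W c p.1 p.2)) ^ 2 :=
      (pow_le_pow_left₀ hε hST.le 2).trans_eq (sq_abs _)
    push_cast
    linarith

lemma exists_partition_cutNorm_le (hW : MemLp (Function.uncurry W) 2) {ε : ℝ} (hε : 0 ≤ ε)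
    {j : ℕ} (hj : ∫ p : I × I, W p.1 p.2 ^ 2 ≤ (j + 1) * ε ^ 2) :
    ∃ n ≤ 4 ^ j, ∃ c : I → Fin n, Measurable c ∧
      cutNorm (fun x y => W x y - blockAverage W c x y) ≤ ε := by
  obtain ⟨n, hn, c, hc, hcut | henergy⟩ := exists_partition_cutNorm_le_or_energy_ge hW hε j
  · exact ⟨n, hn, c, hc, hcut⟩
  refine ⟨n, hn, c, hc, (cutNorm_sub_blockAverage_le hW hc).trans ?_⟩
  rw [← Real.sqrt_sq hε]
  exact Real.sqrt_le_sqrt (by linarith)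

end BlockAverage

lemma four_pow_floor_log_div_four_le {K : ℕ} (hK : 0 < K) : 4 ^ ⌊Real.log K / 4⌋₊ ≤ K := by
  set j := ⌊Real.log K / 4⌋₊
  have hlogK : 0 ≤ Real.log K := Real.log_nonneg (by exact_mod_cast hK)
  have hlog4 : Real.log 4 ≤ 4 := by linarith [Real.log_le_sub_one_of_pos (by norm_num : (0:ℝ) < 4)]
  have hj : (j : ℝ) * Real.log 4 ≤ Real.log K := by
    have := Nat.floor_le (div_nonneg hlogK (by norm_num : (0:ℝ) ≤ 4))
    nlinarith [Real.log_pos (by norm_num : (1:ℝ) < 4)]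
  have : (4 : ℝ) ^ j ≤ K :=
    (Real.log_le_log_iff (by positivity) (by exact_mod_cast hK)).1 (by rwa [Real.log_pow])
  exact_mod_cast this

lemma le_floor_div_four_add_one_mul_sq {L Q : ℝ} (hL : 0 < L) (hQ : 0 ≤ Q) :
    Q ≤ (⌊L / 4⌋₊ + 1) * (2 / √L * √Q) ^ 2 := by
  rw [mul_pow, div_pow, Real.sq_sqrt hL.le, Real.sq_sqrt hQ]
  have := Nat.lt_floor_add_one (L / 4)
  rw [div_lt_iff₀ (by norm_num)] at this
  rw [show (⌊L / 4⌋₊ + 1 : ℝ) * (2 ^ 2 / L * Q) = (⌊L / 4⌋₊ + 1) * 4 * Q / L by ring,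
    le_div_iff₀ hL]
  nlinarith

/-- Weak Regularity Lemma (cut-distance form). -/
theorem weak_regularity_cutDist (W : I → I → ℝ) (hW : IsGraphon W)
    (K : ℕ) (hK : 2 ≤ K) :
    ∃ (P : Fin K → Set I) (w : Fin K → Fin K → ℝ),
      (∀ k, MeasurableSet (P k)) ∧
      Pairwise (Function.onFun Disjoint P) ∧
      (⋃ k, P k) = Set.univ ∧
      (∀ k k', w k k' ∈ Set.Icc (0 : ℝ) 1) ∧
      (∀ k k', w k k' = w k' k) ∧
      cutDist W (stepFun P w) ≤ 2 / Real.sqrt (Real.log K) * l2Norm W := by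
  have hW2 := hW.memLp_two
  have hL : 0 < Real.log K := Real.log_pos (by exact_mod_cast hK)
  obtain ⟨n, hn, c, hc, hcut⟩ := exists_partition_cutNorm_le hW2 (by positivity)
    (le_floor_div_four_add_one_mul_sq hL (integral_nonneg fun p => sq_nonneg (W p.1 p.2)))
  set c' : I → Fin K := Fin.castLE (hn.trans (four_pow_floor_log_div_four_le (by omega))) ∘ c
  have hc' : Measurable c' := (measurable_of_countable _).comp hc
  refine ⟨fun k => c' ⁻¹' {k}, fun k k' => ⨍ p in (c' ⁻¹' {k}) ×ˢ (c' ⁻¹' {k'}), W p.1 p.2,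
    fun k => hc' (measurableSet_singleton k), pairwise_disjoint_fiber c', ?_,
    fun k k' => setAverage_mem_Icc (hW2.integrable one_le_two) (fun p => hW.2.2 p.1 p.2) _,
    fun k k' => setAverage_prod_comm hW.2.1 _ _, ?_⟩
  · rw [← Set.preimage_iUnion, Set.iUnion_of_singleton, Set.preimage_univ]
  have hstep : stepFun (fun k => c' ⁻¹' {k})
      (fun k k' => ⨍ p in (c' ⁻¹' {k}) ×ˢ (c' ⁻¹' {k'}), W p.1 p.2) = blockAverage W c := by
    ext x y
    rw [stepFun_fiber, ← blockAverage_apply,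
      blockAverage_comp_of_injective (Fin.castLE_injective _)]
  rw [hstep]
  exact (cutDist_le_cutNorm_sub W _).trans hcut

end
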